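/- arXiv:0908.1313 — 2 statements merged into one kernel-verified Lean document; each statement's English description precedes it below -/
import Mathlib

section
/- If G is a square-stable graph and v is a vertex belonging to some maximum stable set of G², then v is a simplicial vertex of G. -/
open SimpleGraph

/-- The square of a graph: vertices adjacent iff at distance 1 or 2 in `G`. -/
def SimpleGraph.sq {V : Type*} (G : SimpleGraph V) : SimpleGraph V where
  Adj u v := G.Adj u v ∨ (u ≠ v ∧ ∃ w, G.Adj u w ∧ G.Adj w v)
  symm := by
    constructor
    rintro u v (h | ⟨hne, w, h1, h2⟩)
    · exact Or.inl h.symm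
    · exact Or.inr ⟨hne.symm, w, h2.symm, h1.symm⟩
  loopless := by
    constructor
    rintro u (h | ⟨hne, _⟩)
    · exact G.irrefl h
    · exact hne rfl

/-- A stable (independent) set of vertices. -/
def SimpleGraph.IsStableSet {V : Type*} (G : SimpleGraph V) (s : Set V) : Prop :=
  s.Pairwise fun u v => ¬ G.Adj u v

/-- The stability (independence) number. -/
noncomputable def SimpleGraph.alpha {V : Type*} (G : SimpleGraph V) : ℕ :=
  sSup {n | ∃ s : Finset V, G.IsStableSet ↑s ∧ s.card = n}

/-- The matching number: maximum number of edges in a matching. -/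
noncomputable def SimpleGraph.mu {V : Type*} (G : SimpleGraph V) : ℕ :=
  sSup {n | ∃ M : G.Subgraph, M.IsMatching ∧ M.edgeSet.ncard = n}

/-- `s` is a maximum stable set. -/
def SimpleGraph.IsMaximumStable {V : Type*} (G : SimpleGraph V) (s : Finset V) : Prop :=
  G.IsStableSet ↑s ∧ s.card = G.alpha

/-- `s` is a maximal stable set. -/
def SimpleGraph.IsMaximalStable {V : Type*} (G : SimpleGraph V) (s : Finset V) : Prop :=
  G.IsStableSet ↑s ∧ ∀ v ∉ s, ¬ G.IsStableSet (insert v (↑s : Set V))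

/-- `G` is square-stable if `α(G) = α(G²)`. -/
def SimpleGraph.SquareStable {V : Type*} (G : SimpleGraph V) : Prop :=
  G.alpha = G.sq.alpha

/-- König-Egerváry graph: `α(G) + μ(G) = |V(G)|`. -/
def SimpleGraph.KonigEgervary {V : Type*} [Fintype V] (G : SimpleGraph V) : Prop :=
  G.alpha + G.mu = Fintype.card V

/-- A pendant vertex: a vertex of degree 1. -/
def SimpleGraph.Pendant {V : Type*} (G : SimpleGraph V) (v : V) : Prop :=
  (G.neighborSet v).ncard = 1

/-- `G` has a perfect matching consisting of pendant edges. -/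
def SimpleGraph.HasPendantPerfectMatching {V : Type*} (G : SimpleGraph V) : Prop :=
  ∃ M : G.Subgraph, M.IsPerfectMatching ∧ ∀ e ∈ M.edgeSet, ∃ v ∈ e, G.Pendant v

/-- A simplicial vertex: its neighborhood induces a clique. -/
def SimpleGraph.IsSimplicial {V : Type*} (G : SimpleGraph V) (v : V) : Prop :=
  G.IsClique (G.neighborSet v)

/-- `G` is well-covered: every maximal stable set is maximum. -/
def SimpleGraph.WellCovered {V : Type*} (G : SimpleGraph V) : Prop :=
  ∀ s : Finset V, G.IsMaximalStable s → s.card = G.alpha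

/-- `G` is very well-covered: well-covered, no isolated vertices, `|V| = 2α`. -/
def SimpleGraph.VeryWellCovered {V : Type*} [Fintype V] (G : SimpleGraph V) : Prop :=
  G.WellCovered ∧ (∀ v : V, (G.neighborSet v).ncard ≠ 0) ∧ Fintype.card V = 2 * G.alpha

/-!
If `x, y` are non-adjacent neighbours of `v` and `s` is a stable set of `G²` containing `v`, then
no vertex of `s \ {v}` is within distance 1 of `x` or `y` (it would be within distance 2 of `v`),
so `(s \ {v}) ∪ {x, y}` is stable in `G`. For `s` maximum this gives `α(G) ≥ α(G²) + 1`.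
-/

namespace SimpleGraph

variable {V : Type*} {G : SimpleGraph V}

lemma le_sq (G : SimpleGraph V) : G ≤ G.sq := fun _ _ h => Or.inl h

lemma IsStableSet.anti {H : SimpleGraph V} (hGH : G ≤ H) {s : Set V} (hs : H.IsStableSet s) :
    G.IsStableSet s :=
  hs.mono' fun _ _ h h' => h (hGH h')

lemma IsStableSet.subset {s t : Set V} (hs : G.IsStableSet s) (hts : t ⊆ s) : G.IsStableSet t :=
  Set.Pairwise.mono hts hs

lemma isStableSet_insert {s : Set V} {a : V} :
    G.IsStableSet (insert a s) ↔ G.IsStableSet s ∧ ∀ b ∈ s, a ≠ b → ¬ G.Adj a b := by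
  simp only [IsStableSet, Set.pairwise_insert, G.adj_comm _ a, and_self]

lemma IsStableSet.card_le_alpha [Fintype V] {s : Finset V} (hs : G.IsStableSet s) :
    s.card ≤ G.alpha :=
  le_csSup ⟨Fintype.card V, by rintro _ ⟨t, -, rfl⟩; exact t.card_le_univ⟩ ⟨s, hs, rfl⟩

lemma IsStableSet.notMem_of_sq {s : Set V} (hs : G.sq.IsStableSet s) {v x : V} (hv : v ∈ s)
    (hx : G.Adj v x) : x ∉ s :=
  fun hxs => hs hv hxs hx.ne (Or.inl hx)

lemma IsStableSet.not_adj_of_sq {s : Set V} (hs : G.sq.IsStableSet s) {v x b : V} (hv : v ∈ s)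
    (hb : b ∈ s \ {v}) (hx : G.Adj v x) : ¬ G.Adj x b :=
  fun hxb => hs hv hb.1 (Ne.symm hb.2) (Or.inr ⟨Ne.symm hb.2, x, hx, hxb⟩)

lemma IsStableSet.exchange_of_sq {s : Set V} (hs : G.sq.IsStableSet s) {v x y : V} (hv : v ∈ s)
    (hx : G.Adj v x) (hy : G.Adj v y) (hxy : ¬ G.Adj x y) :
    G.IsStableSet (insert x (insert y (s \ {v}))) := by
  refine isStableSet_insert.2 ⟨isStableSet_insert.2 ⟨?_, ?_⟩, ?_⟩
  · exact (hs.anti G.le_sq).subset Set.sdiff_subset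
  · exact fun b hb _ => hs.not_adj_of_sq hv hb hy
  · rintro b (rfl | hb) _
    · exact hxy
    · exact hs.not_adj_of_sq hv hb hx

end SimpleGraph

theorem stmt6_general {V : Type*} [Fintype V] (G : SimpleGraph V)
    (hss : G.SquareStable) (v : V)
    (h : ∃ s : Finset V, G.sq.IsMaximumStable s ∧ v ∈ s) :
    G.IsSimplicial v := by
  classical
  obtain ⟨s, ⟨hs, hcard⟩, hv⟩ := h
  intro x hx y hy hxy
  by_contra hadj
  have hx_s : x ∉ s := hs.notMem_of_sq hv hx
  have hy_s : y ∉ s := hs.notMem_of_sq hv hy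
  have hstable := hs.exchange_of_sq hv hx hy hadj
  rw [← Finset.coe_erase, ← Finset.coe_insert, ← Finset.coe_insert] at hstable
  have hle := hstable.card_le_alpha
  rw [Finset.card_insert_of_notMem (by simp [hxy, hx_s]),
    Finset.card_insert_of_notMem (by simp [hy_s]), Finset.card_erase_of_mem hv] at hle
  have hpos := Finset.card_pos.2 ⟨v, hv⟩
  rw [SquareStable] at hss
  omega

theorem stmt6 {V : Type*} [Fintype V] (G : SimpleGraph V) (hc : G.Connected)
    (hss : G.SquareStable) (v : V)
    (h : ∃ s : Finset V, G.sq.IsMaximumStable s ∧ v ∈ s) :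
    G.IsSimplicial v :=
  stmt6_general G hss v h
end

section
/- Let G be a square-stable graph and v a vertex of G. Then v belongs to every maximum stable set of G² if and only if v is a simplicial vertex of G that is the unique simplicial vertex in its simplex (i.e., no neighbor of v is simplicial). -/
open SimpleGraph

/-!
A maximum stable set `S` of `G²` is stable in `G`, so square-stability makes it a maximum stable
set of `G` as well. Maximality in `G` gives two facts: every vertex outside `S` has a neighbour in
`S`, and every vertex `u ∈ S` is simplicial, since two non-adjacent neighbours of `u` (which, by
stability of `S` in `G²`, see no other vertex of `S`) could replace `u`. Moreover, replacing
`v ∈ S` by a simplicial neighbour `u` keeps `S` stable in `G²`, because every neighbour of `u`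
is `v` or a neighbour of `v`. So a vertex in every such `S` is simplicial with no simplicial
neighbour; conversely, a vertex with no simplicial neighbour cannot miss `S`, since its
neighbour in `S` would be simplicial.
-/

open Finset

namespace SimpleGraph

variable {V : Type*} {G : SimpleGraph V} {S : Finset V} {u v : V}

theorem sq_adj_of_adj_of_adj {a b c : V} (hac : a ≠ c) (hab : G.Adj a b) (hbc : G.Adj b c) :
    G.sq.Adj a c :=
  Or.inr ⟨hac, b, hab, hbc⟩

theorem isIndepSet_insert {s : Set V} :
    G.IsIndepSet (insert v s) ↔ G.IsIndepSet s ∧ ∀ w ∈ s, v ≠ w → ¬G.Adj v w := by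
  simp only [IsIndepSet, Set.pairwise_insert, G.adj_comm _ v, and_self]

theorem IsIndepSet.of_sq {s : Set V} (h : G.sq.IsIndepSet s) : G.IsIndepSet s :=
  h.mono' fun _ _ hna hadj => hna (Or.inl hadj)

theorem IsIndepSet.not_adj_of_sq {s : Set V} {c w : V} (h : G.sq.IsIndepSet s) (hu : u ∈ s)
    (hw : w ∈ s) (huw : u ≠ w) (huc : G.Adj u c) : ¬G.Adj c w :=
  fun hcw => h hu hw huw (sq_adj_of_adj_of_adj huw huc hcw)

theorem alpha_eq_indepNum (G : SimpleGraph V) : G.alpha = G.indepNum := by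
  simp only [alpha, indepNum, isNIndepSet_iff, IsStableSet, IsIndepSet]

theorem isMaximumStable_iff [Finite V] : G.IsMaximumStable S ↔ G.IsMaximumIndepSet S := by
  refine ⟨fun ⟨hS, hcard⟩ => ⟨hS, fun t ht => ?_⟩, fun hS => ⟨hS.isIndepSet, ?_⟩⟩
  · rw [hcard, alpha_eq_indepNum]
    exact ht.card_le_indepNum
  · rw [alpha_eq_indepNum]
    exact G.maximumIndepSet_card_eq_indepNum S hS

theorem IsMaximumIndepSet.of_sq [Finite V] (hss : G.SquareStable)
    (hS : G.sq.IsMaximumIndepSet S) : G.IsMaximumIndepSet S := by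
  refine ⟨hS.isIndepSet.of_sq, fun t ht => ?_⟩
  rw [G.sq.maximumIndepSet_card_eq_indepNum S hS, ← alpha_eq_indepNum, ← hss,
    alpha_eq_indepNum]
  exact ht.card_le_indepNum

variable [DecidableEq V]

theorem IsIndepSet.sq_insert_erase (hS : G.sq.IsIndepSet ↑S) (hv : v ∈ S) (hvu : G.Adj v u)
    (hu : G.IsSimplicial u) : G.sq.IsIndepSet ↑(insert u (S.erase v)) := by
  rw [coe_insert, isIndepSet_insert]
  refine ⟨hS.mono (coe_subset.2 (erase_subset v S)), fun w hw _ => ?_⟩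
  obtain ⟨hwv, hwS⟩ := mem_erase.1 (mem_coe.1 hw)
  have hvw := hwv.symm
  rintro (huw | ⟨-, x, hux, hxw⟩)
  · exact hS.not_adj_of_sq hv hwS hvw hvu huw
  obtain rfl | hxv := eq_or_ne x v
  · exact hS.of_sq hv hwS hvw hxw
  -- `x` and `v` are both neighbours of the simplicial vertex `u`
  have hvx : G.Adj v x := hu hvu.symm hux hxv.symm
  exact hS hv hwS hvw (sq_adj_of_adj_of_adj hvw hvx hxw)

variable [Finite V]

theorem IsMaximumIndepSet.exists_adj_mem (hS : G.IsMaximumIndepSet S) (hv : v ∉ S) :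
    ∃ u ∈ S, G.Adj v u := by
  by_contra! hnadj
  have hindep : G.IsIndepSet ↑(insert v S) := by
    rw [coe_insert, isIndepSet_insert]
    exact ⟨hS.isIndepSet, fun w hw _ => hnadj w hw⟩
  have := hS.maximum _ hindep
  rw [card_insert_of_notMem hv] at this
  omega

theorem IsMaximumIndepSet.isSimplicial_of_mem (hS : G.IsMaximumIndepSet S)
    (hS₂ : G.sq.IsIndepSet ↑S) (hu : u ∈ S) : G.IsSimplicial u := by
  intro a ha b hb hab
  rw [mem_neighborSet] at ha hb
  by_contra hnab
  have notMem {c : V} (huc : G.Adj u c) : c ∉ S := fun hc =>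
    hS.isIndepSet hu hc huc.ne huc
  have not_adj {c w : V} (huc : G.Adj u c) (hw : w ∈ S.erase u) : ¬G.Adj c w :=
    hS₂.not_adj_of_sq hu (mem_of_mem_erase hw) (ne_of_mem_erase hw).symm huc
  have hb' : b ∉ S.erase u := fun h => notMem hb (mem_of_mem_erase h)
  have ha' : a ∉ insert b (S.erase u) := by
    rw [mem_insert, not_or]
    exact ⟨hab, fun h => notMem ha (mem_of_mem_erase h)⟩
  have hindep : G.IsIndepSet ↑(insert a (insert b (S.erase u))) := by
    simp only [coe_insert, isIndepSet_insert, Set.mem_insert_iff, mem_coe]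
    refine ⟨⟨hS.isIndepSet.mono (coe_subset.2 (erase_subset u S)),
      fun w hw _ => not_adj hb hw⟩, ?_⟩
    rintro w (rfl | hw) _
    exacts [hnab, not_adj ha hw]
  have := hS.maximum _ hindep
  rw [card_insert_of_notMem ha', card_insert_of_notMem hb', card_erase_of_mem hu] at this
  have := card_pos.2 ⟨u, hu⟩
  omega

theorem IsMaximumIndepSet.sq_insert_erase (hS : G.sq.IsMaximumIndepSet S) (hv : v ∈ S)
    (hvu : G.Adj v u) (hu : G.IsSimplicial u) :
    G.sq.IsMaximumIndepSet (insert u (S.erase v)) := by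
  have huS : u ∉ S.erase v := fun h =>
    hS.isIndepSet.of_sq hv (mem_of_mem_erase h) hvu.ne hvu
  refine ⟨hS.isIndepSet.sq_insert_erase hv hvu hu, fun t ht => ?_⟩
  rw [card_insert_of_notMem huS, card_erase_add_one hv]
  exact hS.maximum t ht

end SimpleGraph

theorem stmt8_general {V : Type*} [Fintype V] (G : SimpleGraph V)
    (hss : G.SquareStable) (v : V) :
    (∀ s : Finset V, G.sq.IsMaximumStable s → v ∈ s) ↔
      (G.IsSimplicial v ∧ ∀ u ∈ G.neighborSet v, ¬ G.IsSimplicial u) := by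
  classical
  simp only [isMaximumStable_iff, mem_neighborSet]
  have simplicial_of_mem {S : Finset V} (hS : G.sq.IsMaximumIndepSet S) {u : V} (hu : u ∈ S) :
      G.IsSimplicial u :=
    (hS.of_sq hss).isSimplicial_of_mem hS.isIndepSet hu
  constructor
  · intro hmem
    obtain ⟨S, hS⟩ := G.sq.maximumIndepSet_exists
    refine ⟨simplicial_of_mem hS (hmem S hS), fun u hvu hu => ?_⟩
    have := hmem _ (hS.sq_insert_erase (hmem S hS) hvu hu)
    simp [hvu.ne] at this
  · rintro ⟨-, hnone⟩ S hS
    by_contra hv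
    obtain ⟨u, huS, hvu⟩ := (hS.of_sq hss).exists_adj_mem hv
    exact hnone u hvu (simplicial_of_mem hS huS)

theorem stmt8 {V : Type*} [Fintype V] (G : SimpleGraph V) (hc : G.Connected)
    (hss : G.SquareStable) (v : V) :
    (∀ s : Finset V, G.sq.IsMaximumStable s → v ∈ s) ↔
      (G.IsSimplicial v ∧ ∀ u ∈ G.neighborSet v, ¬ G.IsSimplicial u) :=
  stmt8_general G hss v
end
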